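/- For sequences A and B of coprime lengths n₁ and n₂, the entrywise product sequence C of length n₁n₂ defined by C(k) = A(k mod n₁)·B(k mod n₂) satisfies R_u(C) = R_u(A)·R_u(B) for every u. In particular, if A and B are perfect, then C is perfect. -/

import Mathlib

open Finset Complex

/-! The map `k ↦ (k mod n₁, k mod n₂)` is a bijection `ℤ/n₁n₂ → ℤ/n₁ × ℤ/n₂` (Chinese Remainder
Theorem) that is compatible with shifts. Both `C k` and `C (k + u)` split as products along it,
so the autocorrelation sum of `C` reindexes to a double sum over pairs, which factors as
`R_u(A) · R_u(B)`. If `0 < u < n₁n₂` then `u` is a nonzero shift modulo `n₁` or modulo `n₂`, so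
one factor vanishes when `A` and `B` are perfect. -/

theorem Nat.Coprime.sum_range_mul_eq_sum_product {M : Type*} [AddCommMonoid M] {m n : ℕ}
    (hcop : m.Coprime n) (F : ℕ × ℕ → M) :
    ∑ k ∈ range (m * n), F (k % m, k % n) = ∑ p ∈ range m ×ˢ range n, F p := by
  have hmaps : ∀ k ∈ range (m * n), (k % m, k % n) ∈ range m ×ˢ range n := by
    intro k hk
    have hpos : 0 < m * n := (Nat.zero_le k).trans_lt (mem_range.mp hk)
    simp only [mem_product, mem_range]
    exact ⟨Nat.mod_lt _ (Nat.pos_of_mul_pos_right hpos), Nat.mod_lt _ (Nat.pos_of_mul_pos_left hpos)⟩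
  have hinj : Set.InjOn (fun k => (k % m, k % n)) (range (m * n) : Set ℕ) := by
    intro k hk l hl hkl
    obtain ⟨hm, hn⟩ := Prod.mk.inj hkl
    have hmn : k ≡ l [MOD m * n] := (Nat.modEq_and_modEq_iff_modEq_mul hcop).mp ⟨hm, hn⟩
    rwa [Nat.ModEq, Nat.mod_eq_of_lt (mem_range.mp hk), Nat.mod_eq_of_lt (mem_range.mp hl)] at hmn
  refine sum_nbij _ hmaps hinj ?_ fun _ _ => rfl
  exact surjOn_of_injOn_of_card_le _ hmaps hinj (by simp)

theorem Nat.Coprime.sum_range_mul_mod_mul {R : Type*} [CommSemiring R] {m n : ℕ}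
    (hcop : m.Coprime n) (f g : ℕ → R) :
    ∑ k ∈ range (m * n), f (k % m) * g (k % n) = (∑ i ∈ range m, f i) * ∑ j ∈ range n, g j := by
  rw [sum_mul_sum, ← sum_product', ← hcop.sum_range_mul_eq_sum_product fun p => f p.1 * g p.2]

section Autocorrelation

variable {R : Type*} [CommSemiring R] [StarRing R]

def periodicAutocorr (n : ℕ) (X : ℕ → R) (u : ℕ) : R :=
  ∑ k ∈ range n, X k * starRingEnd R (X ((k + u) % n))

theorem periodicAutocorr_mod (n : ℕ) (X : ℕ → R) (u : ℕ) :
    periodicAutocorr n X (u % n) = periodicAutocorr n X u := by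
  unfold periodicAutocorr
  simp only [Nat.add_mod_mod]

theorem periodicAutocorr_eq_zero_of_not_dvd {n : ℕ} {X : ℕ → R}
    (hX : ∀ u, 0 < u → u < n → periodicAutocorr n X u = 0) {u : ℕ} (hu : ¬ n ∣ u) :
    periodicAutocorr n X u = 0 := by
  rcases Nat.eq_zero_or_pos n with rfl | hn
  · simp [periodicAutocorr]
  rw [← periodicAutocorr_mod]
  exact hX _ (Nat.pos_of_ne_zero fun h => hu (Nat.dvd_of_mod_eq_zero h)) (Nat.mod_lt u hn)

theorem periodicAutocorr_mul_of_coprime {m n : ℕ} (hcop : m.Coprime n) (A B : ℕ → R) (u : ℕ) :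
    periodicAutocorr (m * n) (fun k => A (k % m) * B (k % n)) u =
      periodicAutocorr m A u * periodicAutocorr n B u := by
  unfold periodicAutocorr
  rw [← hcop.sum_range_mul_mod_mul]
  refine sum_congr rfl fun k _ => ?_
  dsimp only
  rw [Nat.mod_mul_right_mod, Nat.mod_mul_left_mod, ← Nat.mod_add_mod k m, ← Nat.mod_add_mod k n,
    map_mul]
  ring

end Autocorrelation

theorem product_sequence_autocorrelation_general (n₁ n₂ : ℕ)
    (hcop : Nat.Coprime n₁ n₂) (A B : ℕ → ℂ) :
    let C : ℕ → ℂ := fun k => A (k % n₁) * B (k % n₂)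
    let RA : ℕ → ℂ := fun u =>
      ∑ k ∈ Finset.range n₁, A k * (starRingEnd ℂ) (A ((k + u) % n₁))
    let RB : ℕ → ℂ := fun u =>
      ∑ k ∈ Finset.range n₂, B k * (starRingEnd ℂ) (B ((k + u) % n₂))
    let RC : ℕ → ℂ := fun u =>
      ∑ k ∈ Finset.range (n₁ * n₂), C k * (starRingEnd ℂ) (C ((k + u) % (n₁ * n₂)))
    (∀ u, RC u = RA u * RB u) ∧
    ((∀ u, 0 < u → u < n₁ → RA u = 0) → (∀ u, 0 < u → u < n₂ → RB u = 0) →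
      ∀ u, 0 < u → u < n₁ * n₂ → RC u = 0) := by
  intro C RA RB RC
  have hmul : ∀ u, RC u = RA u * RB u := periodicAutocorr_mul_of_coprime hcop A B
  refine ⟨hmul, fun hA hB u hu hlt => ?_⟩
  have hndvd : ¬ n₁ * n₂ ∣ u := fun h => (Nat.le_of_dvd hu h).not_gt hlt
  rw [hmul]
  by_cases h₁ : n₁ ∣ u
  · have h₂ : ¬ n₂ ∣ u := fun h₂ => hndvd (hcop.mul_dvd_of_dvd_of_dvd h₁ h₂)
    exact mul_eq_zero_of_right _ (periodicAutocorr_eq_zero_of_not_dvd (X := B) hB h₂)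
  · exact mul_eq_zero_of_left (periodicAutocorr_eq_zero_of_not_dvd (X := A) hA h₁) _

theorem product_sequence_autocorrelation (n₁ n₂ : ℕ) (h1 : 0 < n₁) (h2 : 0 < n₂)
    (hcop : Nat.Coprime n₁ n₂) (A B : ℕ → ℂ) :
    let C : ℕ → ℂ := fun k => A (k % n₁) * B (k % n₂)
    let RA : ℕ → ℂ := fun u =>
      ∑ k ∈ Finset.range n₁, A k * (starRingEnd ℂ) (A ((k + u) % n₁))
    let RB : ℕ → ℂ := fun u =>
      ∑ k ∈ Finset.range n₂, B k * (starRingEnd ℂ) (B ((k + u) % n₂))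
    let RC : ℕ → ℂ := fun u =>
      ∑ k ∈ Finset.range (n₁ * n₂), C k * (starRingEnd ℂ) (C ((k + u) % (n₁ * n₂)))
    (∀ u, RC u = RA u * RB u) ∧
    ((∀ u, 0 < u → u < n₁ → RA u = 0) → (∀ u, 0 < u → u < n₂ → RB u = 0) →
      ∀ u, 0 < u → u < n₁ * n₂ → RC u = 0) :=
  product_sequence_autocorrelation_general n₁ n₂ hcop A B
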